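/- arXiv:1404.4096 — 3 statements merged into one kernel-verified Lean document; each statement's English description precedes it below -/
import Mathlib

section
/- If G is an elementary abelian 2-group, then every unit t of the group algebra F_3[G] satisfies t^2 = 1. -/
/-!
In characteristic `3` the Frobenius `x ↦ x ^ 3` is additive, and it fixes every `a • g` because
`a ^ 3 = a` in `𝔽₃` and `g ^ 3 = g` in `G`. Hence `x ^ 3 = x` throughout `𝔽₃[G]`, and cancelling a
unit `t` in `t ^ 3 = t` gives `t ^ 2 = 1`.
-/

namespace MonoidAlgebra

instance charP {k M : Type*} [Semiring k] [Monoid M] (p : ℕ) [CharP k p] :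
    CharP (MonoidAlgebra k M) p :=
  charP_of_injective_ringHom (f := singleOneRingHom) single_right_injective p

theorem pow_char_eq_self {k M : Type*} [CommSemiring k] [CommMonoid M] (p : ℕ) [Fact p.Prime]
    [CharP k p] (hk : ∀ a : k, a ^ p = a) (hM : ∀ m : M, m ^ p = m) (x : MonoidAlgebra k M) :
    x ^ p = x := by
  induction x using MonoidAlgebra.induction with
  | zero => exact zero_pow (Fact.out : p.Prime).ne_zero
  | single_add m a f _ _ ih => rw [add_pow_char, ih, single_pow, hM, hk]

end MonoidAlgebra

theorem stmt_3 (G : Type*) [CommGroup G] (hG : ∀ g : G, g ^ 2 = 1) :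
    ∀ t : (MonoidAlgebra (ZMod 3) G)ˣ, t ^ 2 = 1 := by
  intro t
  have hG3 (g : G) : g ^ 3 = g := by rw [pow_succ, hG g, one_mul]
  have ht3 : t ^ 3 = t :=
    Units.ext (by push_cast; exact MonoidAlgebra.pow_char_eq_self 3 ZMod.pow_card hG3 _)
  exact mul_eq_right.mp (by rw [← pow_succ]; exact ht3)
end

section
/- Let p be an odd prime. Then 2 is a primitive root modulo p if and only if every element of F_2[C_p] that is not the norm element and not in the kernel of the augmentation map is a unit. -/
/-!
Over `𝔽₂` the polynomial `X ^ p - 1 = (X - 1) Φ_p` has coprime factors, since `Φ_p(1) = p` is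
odd. As `𝔽₂[C_p]` is a quotient of `𝔽₂[X]` by `X ^ p - 1`, the map `t ↦ (ε t, t mod Φ_p)` embeds it
into `𝔽₂ × 𝔽₂[X]/(Φ_p)`, and the norm element is the element sent to `(1, 0)`. Adding a multiple
of the norm element changes the augmentation but not the residue mod `Φ_p`. So the units condition
says exactly that `𝔽₂[X]/(Φ_p)` is a field, that is, that `Φ_p` is irreducible over `𝔽₂`. Every
irreducible factor of `Φ_p` over `𝔽₂` has degree `ord_p 2`, so this happens iff `ord_p 2 = p - 1`.
-/

open Polynomial MonoidAlgebra

section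
variable {M : Type*} [Monoid M] {n : ℕ} [NeZero n]

def ZMod.powHom (x : M) (hx : x ^ n = 1) : Multiplicative (ZMod n) →* M where
  toFun g := x ^ g.toAdd.val
  map_one' := by simp
  map_mul' a b := by
    rw [toAdd_mul, ZMod.val_add, ← pow_eq_pow_mod _ hx, pow_add]

lemma ZMod.powHom_ofAdd_one (x : M) (hx : x ^ n = 1) :
    ZMod.powHom x hx (.ofAdd 1) = x := by
  simp only [ZMod.powHom, MonoidHom.coe_mk, OneHom.coe_mk, toAdd_ofAdd, ZMod.val_one_eq_one_mod]
  rw [← pow_eq_pow_mod _ hx, pow_one]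

end

lemma Function.Injective.isUnit_of_isUnit_map {R S F : Type*} [Ring R] [IsArtinianRing R]
    [Semiring S] [FunLike F R S] [RingHomClass F R S] {φ : F} (hφ : Function.Injective φ) {a : R}
    (ha : IsUnit (φ a)) : IsUnit a := by
  refine IsArtinianRing.isUnit_of_mem_nonZeroDivisors (mem_nonZeroDivisors_iff.2 ⟨?_, ?_⟩)
  · intro x hx
    exact hφ (by rw [map_zero, ← ha.mul_right_eq_zero, ← map_mul, hx, map_zero])
  · intro x hx
    exact hφ (by rw [map_zero, ← ha.mul_left_eq_zero, ← map_mul, hx, map_zero])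

lemma Polynomial.irreducible_of_isField_adjoinRoot {R : Type*} [CommRing R] [IsDomain R]
    {f : R[X]} (hf : f ≠ 0) (h : IsField (AdjoinRoot f)) : Irreducible f :=
  ((Ideal.span_singleton_prime hf).1 (Ideal.Quotient.maximal_of_isField _ h).isPrime).irreducible

lemma ZMod.irreducible_cyclotomic_iff_orderOf {ℓ n : ℕ} [Fact ℓ.Prime] (h : ¬ℓ ∣ n) :
    Irreducible (cyclotomic n (ZMod ℓ)) ↔ orderOf (ℓ : ZMod n) = n.totient := by
  have hcop : ℓ.Coprime n := (Nat.Prime.coprime_iff_not_dvd Fact.out).2 h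
  constructor
  · intro hirr
    have := natDegree_of_dvd_cyclotomic_of_irreducible (p := ℓ) (f := 1) (by simp)
      (by simpa using hcop) dvd_rfl hirr
    rw [natDegree_cyclotomic, ← orderOf_units, coe_unitOfCoprime] at this
    simpa using this.symm
  · intro hord
    refine irreducible_of_dvd_cyclotomic_of_natDegree h dvd_rfl ?_
    rw [natDegree_cyclotomic, ← orderOf_units, coe_unitOfCoprime, hord]

namespace CyclicGroupAlgebra

section CommRing

variable (K : Type*) [CommRing K] (n : ℕ)

noncomputable def gen : MonoidAlgebra K (Multiplicative (ZMod n)) := of K _ (.ofAdd 1)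

lemma gen_pow (k : ℕ) : gen K n ^ k = of K _ (.ofAdd (k : ZMod n)) := by
  rw [gen, ← map_pow, ← ofAdd_nsmul, nsmul_one]

lemma aeval_gen_X_pow_sub_one : aeval (gen K n) (X ^ n - 1 : K[X]) = 0 := by
  simp [gen_pow, MonoidAlgebra.one_def]

noncomputable def augmentation : MonoidAlgebra K (Multiplicative (ZMod n)) →ₐ[K] K :=
  MonoidAlgebra.lift K K _ 1

lemma augmentation_apply (t : MonoidAlgebra K (Multiplicative (ZMod n))) :
    augmentation K n t = t.coeff.sum fun _ a ↦ a := by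
  simp [augmentation, MonoidAlgebra.lift_apply]

lemma augmentation_aeval_gen (u : K[X]) : augmentation K n (aeval (gen K n) u) = u.eval 1 := by
  rw [← aeval_algHom_apply, gen]
  simp [augmentation]

variable [NeZero n]

lemma aeval_gen_surjective : Function.Surjective (aeval (R := K) (gen K n)) := by
  intro t
  induction t using MonoidAlgebra.induction_on with
  | of g => exact ⟨X ^ g.toAdd.val, by rw [map_pow, aeval_X, gen_pow, ZMod.natCast_zmod_val]; rfl⟩
  | add s t hs ht =>
    obtain ⟨u, rfl⟩ := hs
    obtain ⟨v, rfl⟩ := ht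
    exact ⟨u + v, map_add _ u v⟩
  | smul c t ht =>
    obtain ⟨u, rfl⟩ := ht
    exact ⟨c • u, map_smul _ c u⟩

lemma aeval_gen_geom_sum :
    aeval (gen K n) (∑ i ∈ Finset.range n, X ^ i : K[X]) = ∑ g, of K _ g := by
  simp only [map_sum, map_pow, aeval_X, gen_pow]
  refine Finset.sum_nbij' (fun i ↦ .ofAdd (i : ZMod n)) (fun g ↦ g.toAdd.val) ?_ ?_ ?_ ?_ ?_
  · intro i _; exact Finset.mem_univ _
  · intro g _; exact Finset.mem_range.2 (ZMod.val_lt _)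
  · intro i hi; simp [ZMod.val_natCast_of_lt (Finset.mem_range.1 hi)]
  · intro g _; simp
  · intro i _; rfl

lemma augmentation_sum_of : augmentation K n (∑ g, of K _ g) = n := by
  simp [augmentation]

noncomputable def toAdjoinRoot (f : K[X]) (hf : f ∣ X ^ n - 1) :
    MonoidAlgebra K (Multiplicative (ZMod n)) →ₐ[K] AdjoinRoot f :=
  MonoidAlgebra.lift K _ _ <| ZMod.powHom (AdjoinRoot.root f) <| by
    rw [← sub_eq_zero]
    simpa using AdjoinRoot.mk_eq_zero.2 hf

lemma toAdjoinRoot_aeval_gen (f : K[X]) (hf : f ∣ X ^ n - 1) (u : K[X]) :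
    toAdjoinRoot K n f hf (aeval (gen K n) u) = AdjoinRoot.mk f u := by
  rw [← aeval_algHom_apply, toAdjoinRoot, gen, lift_of, ZMod.powHom_ofAdd_one, AdjoinRoot.aeval_eq]

end CommRing

section Field

variable {K : Type*} [Field K] {n : ℕ} [NeZero n] {f : K[X]}

lemma injective_augmentation_prod_toAdjoinRoot (hf : f * (X - 1) = X ^ n - 1)
    (h1 : f.eval 1 ≠ 0) :
    Function.Injective ((augmentation K n).prod (toAdjoinRoot K n f (Dvd.intro _ hf))) := by
  rw [injective_iff_map_eq_zero]
  intro s hs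
  obtain ⟨u, rfl⟩ := aeval_gen_surjective K n s
  simp only [AlgHom.prod_apply, Prod.mk_eq_zero, augmentation_aeval_gen,
    toAdjoinRoot_aeval_gen, AdjoinRoot.mk_eq_zero] at hs
  have hX : X - C 1 ∣ u := dvd_iff_isRoot.2 hs.1
  have hcop : IsCoprime f (X - C 1) :=
    ((irreducible_X_sub_C 1).coprime_iff_not_dvd.2 (mt dvd_iff_isRoot.1 h1)).symm
  obtain ⟨w, rfl⟩ := hcop.mul_dvd hs.2 hX
  rw [map_one, hf, map_mul, aeval_gen_X_pow_sub_one, zero_mul]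

lemma isUnit_of_augmentation_ne_zero_of_toAdjoinRoot_ne_zero (hf : f * (X - 1) = X ^ n - 1)
    (h1 : f.eval 1 ≠ 0) (hirr : Irreducible f) {t : MonoidAlgebra K (Multiplicative (ZMod n))}
    (hε : augmentation K n t ≠ 0) (hψ : toAdjoinRoot K n f (Dvd.intro _ hf) t ≠ 0) :
    IsUnit t := by
  have : Fact (Irreducible f) := ⟨hirr⟩
  have : IsArtinianRing (MonoidAlgebra K (Multiplicative (ZMod n))) := .of_finite K _
  refine (injective_augmentation_prod_toAdjoinRoot hf h1).isUnit_of_isUnit_map ?_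
  exact Prod.isUnit_iff.2 ⟨hε.isUnit, hψ.isUnit⟩

end Field

section PrimeOrder

variable (K : Type*) [CommRing K] (p : ℕ) [Fact p.Prime]

lemma toAdjoinRoot_cyclotomic_sum_of :
    toAdjoinRoot K p (cyclotomic p K) (cyclotomic.dvd_X_pow_sub_one p K) (∑ g, of K _ g) = 0 := by
  rw [← aeval_gen_geom_sum, toAdjoinRoot_aeval_gen, ← cyclotomic_prime, AdjoinRoot.mk_self]

variable {p}

lemma augmentation_sum_of_eq_one (hodd : Odd p) :
    augmentation (ZMod 2) p (∑ g, of (ZMod 2) _ g) = 1 := by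
  rw [augmentation_sum_of, ZMod.natCast_eq_one_iff_odd]
  exact hodd

lemma isUnit_of_ne_sum_of (hodd : Odd p) (hirr : Irreducible (cyclotomic p (ZMod 2)))
    {t : MonoidAlgebra (ZMod 2) (Multiplicative (ZMod p))} (htN : t ≠ ∑ g, of (ZMod 2) _ g)
    (hε : augmentation (ZMod 2) p t ≠ 0) : IsUnit t := by
  have hf := cyclotomic_prime_mul_X_sub_one (ZMod 2) p
  have h1 : (cyclotomic p (ZMod 2)).eval 1 ≠ 0 := by
    rw [eval_one_cyclotomic_prime, ZMod.natCast_eq_one_iff_odd.2 hodd]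
    exact one_ne_zero
  have hε₁ : augmentation (ZMod 2) p t = 1 := Fin.eq_one_of_ne_zero _ hε
  refine isUnit_of_augmentation_ne_zero_of_toAdjoinRoot_ne_zero hf h1 hirr hε fun hψ ↦ htN ?_
  refine injective_augmentation_prod_toAdjoinRoot hf h1 ?_
  rw [AlgHom.prod_apply, AlgHom.prod_apply, hψ, hε₁, toAdjoinRoot_cyclotomic_sum_of,
    augmentation_sum_of_eq_one hodd]

lemma irreducible_cyclotomic_of_forall_isUnit (hodd : Odd p)
    (h : ∀ t : MonoidAlgebra (ZMod 2) (Multiplicative (ZMod p)),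
      t ≠ ∑ g, of (ZMod 2) _ g → augmentation (ZMod 2) p t ≠ 0 → IsUnit t) :
    Irreducible (cyclotomic p (ZMod 2)) := by
  set ψ := toAdjoinRoot (ZMod 2) p _ (cyclotomic.dvd_X_pow_sub_one p (ZMod 2))
  have hψN : ψ (∑ g, of (ZMod 2) _ g) = 0 := toAdjoinRoot_cyclotomic_sum_of _ p
  refine irreducible_of_isField_adjoinRoot (cyclotomic_ne_zero p _) ⟨?_, mul_comm, ?_⟩
  · have hdeg := degree_cyclotomic_pos p (ZMod 2) (Fact.out : p.Prime).pos
    exact (AdjoinRoot.nontrivial _ hdeg.ne').exists_pair_ne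
  · intro b hb
    obtain ⟨u, rfl⟩ := AdjoinRoot.mk_surjective b
    set t₀ := aeval (gen (ZMod 2) p) u
    set t := t₀ + (1 - augmentation (ZMod 2) p t₀) • ∑ g, of (ZMod 2) _ g
    have hεt : augmentation (ZMod 2) p t = 1 := by
      simp only [t, map_add, map_smul, augmentation_sum_of_eq_one hodd, smul_eq_mul, mul_one,
        add_sub_cancel]
    have hψt : ψ t = AdjoinRoot.mk _ u := by
      simp only [t, map_add, map_smul, hψN, smul_zero, add_zero, t₀, ψ, toAdjoinRoot_aeval_gen]
    have htN : t ≠ ∑ g, of (ZMod 2) _ g := fun htN ↦ hb (by rw [← hψt, htN, hψN])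
    obtain ⟨c, hc⟩ := ((h t htN (by rw [hεt]; exact one_ne_zero)).map ψ).exists_right_inv
    exact ⟨c, hψt ▸ hc⟩

end PrimeOrder

end CyclicGroupAlgebra

theorem stmt_10 (p : ℕ) [Fact p.Prime] (hodd : Odd p) :
    orderOf (2 : ZMod p) = p - 1 ↔
      ∀ t : MonoidAlgebra (ZMod 2) (Multiplicative (ZMod p)),
        t ≠ (∑ g : Multiplicative (ZMod p),
              MonoidAlgebra.of (ZMod 2) (Multiplicative (ZMod p)) g) →
        (t.coeff.sum fun _ a => a) ≠ 0 → IsUnit t := by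
  have hirr := ZMod.irreducible_cyclotomic_iff_orderOf (ℓ := 2) (n := p) hodd.not_two_dvd_nat
  rw [Nat.totient_prime Fact.out, Nat.cast_ofNat] at hirr
  simp only [← CyclicGroupAlgebra.augmentation_apply]
  rw [← hirr]
  exact ⟨fun hirr t htN hε ↦ CyclicGroupAlgebra.isUnit_of_ne_sum_of hodd hirr htN hε,
    CyclicGroupAlgebra.irreducible_cyclotomic_of_forall_isUnit hodd⟩
end

section
/- Let p > 3 be prime. If (1 + x + x^2)^p = 1 in F_2[x]/(x^p - 1), then for all 0 ≤ j ≤ p, the binomial coefficient C(p, j) is congruent modulo 2 to C(p, 3j mod p). -/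
/-!
Since `(1 + x) * (1 + x + x ^ 2) = 1 + x ^ 3` in characteristic two, the hypothesis gives
`(1 + x) ^ p = (1 + x ^ 3) ^ p` in `𝔽₂[x] / (x ^ p - 1) ≅ 𝔽₂[ℤ/p]`. Compare the coefficients of
`x ^ (3 * j)`: on the left it is `C(p, 3 * j % p)`, and on the right it is `C(p, j)`, because
multiplication by `3` is injective on `ℤ/p`.
-/

open Polynomial AddMonoidAlgebra Finset

theorem ZMod.natCast_ne_zero_of_pos_of_lt {a n : ℕ} (h0 : 0 < a) (h : a < n) :
    (a : ZMod n) ≠ 0 := by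
  rw [Ne, ZMod.natCast_eq_zero_iff]
  exact Nat.not_dvd_of_pos_of_lt h0 h

theorem CharTwo.one_add_mul_one_add_add_sq {A : Type*} [CommRing A] [CharP A 2] (x : A) :
    (1 + x) * (1 + x + x ^ 2) = 1 + x ^ 3 := by
  linear_combination (x + x ^ 2) * CharTwo.two_eq_zero (R := A)

namespace AddMonoidAlgebra

variable {R G : Type*} [CommSemiring R] [AddCommMonoid G]

theorem one_add_single_pow (a : G) (n : ℕ) :
    (1 + single a 1 : R[G]) ^ n = ∑ k ∈ range (n + 1), single (k • a) (n.choose k : R) := by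
  rw [add_comm, add_pow]
  refine sum_congr rfl fun k _ => ?_
  rw [one_pow, mul_one, single_pow, one_pow, natCast_def, single_mul_single, one_mul, add_zero]

theorem coeff_one_add_single_pow_prime {p : ℕ} [Fact p.Prime] {a c : ZMod p} (ha : a ≠ 0)
    (hc : c ≠ 0) : ((1 + single a 1 : R[ZMod p]) ^ p).coeff c = p.choose (c / a).val := by
  have hval : (c / a).val < p := ZMod.val_lt _
  rw [one_add_single_pow, coeff_sum, sum_apply', sum_eq_single_of_mem (c / a).val
    (mem_range.mpr (by omega))]
  · simp [div_mul_cancel₀ _ ha]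
  · intro k hk hne
    simp only [coeff_single, Finsupp.single_apply, nsmul_eq_mul, ite_eq_right_iff]
    intro hkc
    rcases Nat.lt_succ_iff.mp (mem_range.mp hk) |>.lt_or_eq with hkp | rfl
    · refine absurd ?_ hne
      rw [← eq_div_of_mul_eq ha hkc, ZMod.val_natCast, Nat.mod_eq_of_lt hkp]
    · exact absurd (by rw [← hkc, ZMod.natCast_self, zero_mul]) hc

end AddMonoidAlgebra

noncomputable def Polynomial.toCyclicGroupAlgebra (R : Type*) [CommRing R] (n : ℕ) :
    R[X] ⧸ Ideal.span {(X : R[X]) ^ n - 1} →ₐ[R] R[ZMod n] :=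
  Ideal.Quotient.liftₐ _ (aeval (single 1 1)) fun f hf => by
    obtain ⟨g, rfl⟩ := Ideal.mem_span_singleton.mp hf
    simp [single_pow, one_def]

@[simp]
theorem Polynomial.toCyclicGroupAlgebra_mk_X (R : Type*) [CommRing R] (n : ℕ) :
    toCyclicGroupAlgebra R n (Ideal.Quotient.mk _ X) = single 1 1 :=
  aeval_X _

theorem Polynomial.one_add_single_pow_eq_one_add_single_three_pow {R : Type*} [CommRing R]
    [CharP R 2] {n : ℕ}
    (h : Ideal.Quotient.mk (Ideal.span {(X : R[X]) ^ n - 1}) (1 + X + X ^ 2) ^ n = 1) :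
    (1 + single (1 : ZMod n) (1 : R)) ^ n = (1 + single 3 1) ^ n := by
  set I := Ideal.span {(X : R[X]) ^ n - 1}
  have hcube := congrArg (Ideal.Quotient.mk I) (CharTwo.one_add_mul_one_add_add_sq (X : R[X]))
  have hx : Ideal.Quotient.mk I ((1 + X) ^ n) = Ideal.Quotient.mk I ((1 + X ^ 3) ^ n) := by
    rw [map_pow, map_pow, ← hcube, map_mul, mul_pow, h, mul_one]
  simpa [I, single_pow] using congrArg (toCyclicGroupAlgebra R n) hx

theorem stmt_17 (p : ℕ) (hp : p.Prime) (h3 : 3 < p)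
    (h : (Ideal.Quotient.mk (Ideal.span {(X : Polynomial (ZMod 2)) ^ p - 1})
      (1 + X + X ^ 2)) ^ p = 1) :
    ∀ j ≤ p, Nat.choose p j ≡ Nat.choose p (3 * j % p) [MOD 2] := by
  have : Fact p.Prime := ⟨hp⟩
  have hG := one_add_single_pow_eq_one_add_single_three_pow h
  intro j hj
  rcases hj.lt_or_eq with hjp | rfl
  · rcases j.eq_zero_or_pos with rfl | hj0
    · rfl
    have h3p : (3 : ZMod p) ≠ 0 := by
      exact_mod_cast ZMod.natCast_ne_zero_of_pos_of_lt three_pos h3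
    have hc : ((3 * j : ℕ) : ZMod p) ≠ 0 := by
      push_cast
      exact mul_ne_zero h3p (ZMod.natCast_ne_zero_of_pos_of_lt hj0 hjp)
    have hcoeff := congrArg (·.coeff ((3 * j : ℕ) : ZMod p)) hG
    rw [coeff_one_add_single_pow_prime one_ne_zero hc, coeff_one_add_single_pow_prime h3p hc,
      div_one, ZMod.val_natCast, Nat.cast_mul, Nat.cast_ofNat, mul_div_cancel_left₀ _ h3p,
      ZMod.val_natCast_of_lt hjp] at hcoeff
    exact ((ZMod.natCast_eq_natCast_iff _ _ _).mp hcoeff).symm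
  · simp [Nat.ModEq]
end
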